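/- Let f₀(ξ) = e^{-|ξ|}/|ξ| on ℝ³ \ {0}. If for all t ∈ ℝ and almost every ξ ∈ ℝ³ one has cos((t − t₀)|ξ| + θ)·e^{-i x₀·ξ} = cos(t|ξ|) (as an identity of complex numbers, given f₀(ξ) ≠ 0 a.e.), then t₀ = 0, x₀ = 0 and θ ≡ 0 (mod 2π). -/

import Mathlib

open Real

lemma exp_neg_I_im (a : ℝ) : (Complex.exp (-Complex.I * a)).im = -Real.sin a := by
  rw [show -Complex.I * (a:ℂ) = ((-a : ℝ):ℂ) * Complex.I by push_cast; ring,
    Complex.exp_ofReal_mul_I_im]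
  simp

/-- If `cos((t − t₀)|ξ| + θ) e^{-i x₀·ξ} = cos(t|ξ|)` for all `t ∈ ℝ` and all
`ξ ≠ 0` in `ℝ³`, then `t₀ = 0`, `x₀ = 0` and `θ ≡ 0 (mod 2π)`. -/
theorem phase_rigidity
    (t₀ : ℝ) (x₀ : EuclideanSpace ℝ (Fin 3)) (θ : ℝ)
    (h : ∀ t : ℝ, ∀ ξ : EuclideanSpace ℝ (Fin 3), ξ ≠ 0 →
      (Real.cos ((t - t₀) * ‖ξ‖ + θ) : ℂ) *
          Complex.exp (-Complex.I * (inner ℝ x₀ ξ : ℝ)) =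
        (Real.cos (t * ‖ξ‖) : ℂ)) :
    t₀ = 0 ∧ x₀ = 0 ∧ ∃ k : ℤ, θ = 2 * π * k := by
  have key : ∀ ξ : EuclideanSpace ℝ (Fin 3), ξ ≠ 0 →
      Real.sin ((inner ℝ x₀ ξ : ℝ)) = 0 := by
    intro ξ hξ
    have hr : (0:ℝ) < ‖ξ‖ := norm_pos_iff.mpr hξ
    have h1 := h (t₀ - θ / ‖ξ‖) ξ hξ
    have harg : (t₀ - θ / ‖ξ‖ - t₀) * ‖ξ‖ + θ = 0 := by field_simp; ring
    rw [harg] at h1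
    have h1' : Complex.exp (-Complex.I * ((inner ℝ x₀ ξ : ℝ):ℂ)) =
        ((Real.cos ((t₀ - θ / ‖ξ‖) * ‖ξ‖) : ℝ) : ℂ) := by
      simpa using h1
    have h2 := congrArg Complex.im h1'
    rw [exp_neg_I_im, Complex.ofReal_im] at h2
    linarith
  have hx : x₀ = 0 := by
    by_contra hx0
    have hn : (0:ℝ) < ‖x₀‖ := norm_pos_iff.mpr hx0
    set s : ℝ := π / (2 * ‖x₀‖^2) with hs_def
    have hs : 0 < s := by positivity
    have hξ : s • x₀ ≠ 0 := smul_ne_zero (ne_of_gt hs) hx0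
    have h3 := key (s • x₀) hξ
    rw [real_inner_smul_right, real_inner_self_eq_norm_sq] at h3
    have hval : s * ‖x₀‖^2 = π/2 := by
      rw [hs_def]; field_simp
    rw [hval] at h3
    simp at h3
  subst hx
  have key2 : ∀ r : ℝ, 0 < r → ∀ t : ℝ,
      Real.cos ((t - t₀) * r + θ) = Real.cos (t * r) := by
    intro r hr t
    have hne : (EuclideanSpace.single (0:Fin 3) r : EuclideanSpace ℝ (Fin 3)) ≠ 0 := by
      intro h0
      have := congrArg (fun v : EuclideanSpace ℝ (Fin 3) => v 0) h0
      simp at this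
      exact hr.ne' this
    have h4 := h t _ hne
    have he : ‖(EuclideanSpace.single (0 : Fin 3) r : EuclideanSpace ℝ (Fin 3))‖ = r := by
      rw [EuclideanSpace.norm_single, Real.norm_eq_abs, abs_of_pos hr]
    rw [he] at h4
    simp only [inner_zero_left] at h4
    norm_num at h4
    exact_mod_cast h4
  have key3 : ∀ r : ℝ, 0 < r → ∃ k : ℤ, (k:ℝ) * (2 * π) = θ - t₀ * r := by
    intro r hr
    have := key2 r hr 0
    rw [show (0 - t₀) * r + θ = θ - t₀ * r by ring] at this
    simp at this
    exact (Real.cos_eq_one_iff _).mp this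
  have ht0 : t₀ = 0 := by
    by_contra ht
    have hta : 0 < |t₀| := abs_pos.mpr ht
    obtain ⟨k1, hk1⟩ := key3 1 one_pos
    obtain ⟨k2, hk2⟩ := key3 (1 + π / |t₀|) (by positivity)
    rcases lt_or_gt_of_ne ht with hneg | hpos
    · rw [abs_of_neg hneg] at hk2
      have hdiv : t₀ * (π / -t₀) = -π := by rw [div_neg, mul_neg, mul_div_cancel₀ _ ht]
      have h5 : ((k1:ℝ) - k2) * (2*π) = -π := by linear_combination hk1 - hk2 + hdiv
      have hc : ((k1:ℝ) - k2) * 2 = -1 :=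
        mul_right_cancel₀ Real.pi_ne_zero (by linear_combination h5)
      have : ((k1 - k2) * 2 : ℤ) = -1 := by exact_mod_cast hc
      omega
    · rw [abs_of_pos hpos] at hk2
      have hdiv : t₀ * (π / t₀) = π := by rw [mul_div_cancel₀ _ ht]
      have h5 : ((k1:ℝ) - k2) * (2*π) = π := by linear_combination hk1 - hk2 + hdiv
      have hc : ((k1:ℝ) - k2) * 2 = 1 :=
        mul_right_cancel₀ Real.pi_ne_zero (by linear_combination h5)
      have : ((k1 - k2) * 2 : ℤ) = 1 := by exact_mod_cast hc
      omega
  subst ht0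
  refine ⟨rfl, rfl, ?_⟩
  obtain ⟨k, hk⟩ := key3 1 one_pos
  exact ⟨k, by linarith [hk]⟩
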